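/- If X follows the q-Gaussian N_q(m, σ²) with 1 ≤ q < 3, then the normalized (2q-1)-variance ∫ (x-m)² · f(x)^{2q-1}/ν_{2q-1} dx equals ((3-q)/(q+1))·σ², where ν_{2q-1} = ∫ f(x)^{2q-1} dx. -/

import Mathlib

open MeasureTheory

/-- q-exponential (with cutoff), reducing to exp at q = 1. -/
noncomputable def qExp (q x : ℝ) : ℝ :=
  if q = 1 then Real.exp x else (max 0 (1 + (1 - q) * x)) ^ (1 / (1 - q))

/-- Normalizing constant C_q = ∫ e_q(-x²) dx. -/
noncomputable def Cq (q : ℝ) : ℝ := ∫ x : ℝ, qExp q (-(x ^ 2))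

/-- q-Gaussian density N_q(m,σ²) with β = 1/(3-q). -/
noncomputable def qGauss (q m σ x : ℝ) : ℝ :=
  Real.sqrt (1 / (3 - q)) / (σ * Cq q) * qExp q (-((1 / (3 - q)) * (x - m) ^ 2 / σ ^ 2))

/-!
For `q > 1`, `f ^ (2q-1)` is a constant multiple of `(1 + b (x-m)²) ^ (-p)` with
`b = (q-1)/((3-q)σ²)` and `p = (2q-1)/(q-1)`; for `q = 1` it is a multiple of a Gaussian.
Constant factors and the shift by `m` cancel in the normalized moment. Integrating the derivative
of `x (1 + b x²) ^ (-(p-1))` (resp. `x e^{-c x²}`) over `ℝ` gives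
`∫ x² g = (b (2p-3))⁻¹ ∫ g` (resp. `(2c)⁻¹ ∫ g`), and `b (2p-3) = (q+1)/((3-q)σ²)`.
All the functions involved are integrable because `p > 5/2`, which is `q < 3`.
-/

open Real

theorem integrable_mul_of_integrable_sq_mul {h : ℝ → ℝ} (hh : Integrable h)
    (hh2 : Integrable fun x ↦ x ^ 2 * h x) : Integrable fun x ↦ x * h x := by
  refine (hh.norm.add hh2.norm).mono' (aestronglyMeasurable_id.mul hh.1) ?_
  filter_upwards with x
  simp only [Pi.add_apply, norm_mul, norm_pow, Real.norm_eq_abs, sq_abs]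
  have hx : |x| ≤ 1 + x ^ 2 := by nlinarith [abs_nonneg x, sq_abs x]
  nlinarith [mul_le_mul_of_nonneg_right hx (abs_nonneg (h x))]

theorem integral_sq_mul_eq_of_hasDerivAt {g h : ℝ → ℝ} {c : ℝ} (hc : c ≠ 0)
    (hderiv : ∀ x, HasDerivAt (fun x ↦ x * g x) (h x - c * (x ^ 2 * h x)) x)
    (hg : Integrable fun x ↦ x * g x) (hh : Integrable h)
    (hh2 : Integrable fun x ↦ x ^ 2 * h x) :
    ∫ x, x ^ 2 * h x = c⁻¹ * ∫ x, h x := by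
  have h0 := integral_eq_zero_of_hasDerivAt_of_integrable hderiv (hh.sub (hh2.const_mul c)) hg
  rw [integral_sub hh (hh2.const_mul c), integral_const_mul, sub_eq_zero] at h0
  rw [h0, inv_mul_cancel_left₀ hc]

theorem integral_sub_sq_mul_div_integral_comp_sub {h : ℝ → ℝ} {K γ : ℝ} (m : ℝ) (hK : K ≠ 0)
    (hh : ∫ x, h x ≠ 0) (hmoment : ∫ x, x ^ 2 * h x = γ * ∫ x, h x) :
    ∫ x, (x - m) ^ 2 * (K * h (x - m) / ∫ t, K * h (t - m)) = γ := by
  have hshift : ∫ x, (x - m) ^ 2 * h (x - m) = ∫ x, x ^ 2 * h x :=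
    integral_sub_right_eq_self (fun x ↦ x ^ 2 * h x) m
  simp_rw [mul_div_assoc', mul_left_comm _ K, integral_div, integral_const_mul, hshift,
    integral_sub_right_eq_self h, hmoment]
  field_simp

section PowerLaw

variable {b : ℝ}

theorem one_add_mul_sq_rpow_neg_sub_one (hb : 0 ≤ b) (p x : ℝ) :
    (1 + b * x ^ 2) ^ (-(p - 1)) = (1 + b * x ^ 2) * (1 + b * x ^ 2) ^ (-p) := by
  rw [show -(p - 1) = -p + 1 by ring, rpow_add_one (by positivity), mul_comm]

theorem sq_mul_one_add_mul_sq_rpow_neg (hb : 0 < b) (p x : ℝ) :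
    x ^ 2 * (1 + b * x ^ 2) ^ (-p) =
      b⁻¹ * ((1 + b * x ^ 2) ^ (-(p - 1)) - (1 + b * x ^ 2) ^ (-p)) := by
  rw [one_add_mul_sq_rpow_neg_sub_one hb.le]
  field_simp
  ring

theorem integrable_one_add_mul_sq_rpow_neg (hb : 0 < b) {p : ℝ} (hp : 1 / 2 < p) :
    Integrable fun x : ℝ ↦ (1 + b * x ^ 2) ^ (-p) := by
  have h := (integrable_rpow_neg_one_add_norm_sq (E := ℝ) (μ := volume) (r := 2 * p)
    (by simp; linarith)).comp_mul_left' (sqrt_pos.2 hb).ne'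
  refine h.congr (Filter.Eventually.of_forall fun x ↦ ?_)
  simp only [norm_mul, mul_pow, norm_eq_abs, sq_abs, sq_sqrt hb.le]
  ring_nf

theorem integrable_sq_mul_one_add_mul_sq_rpow_neg (hb : 0 < b) {p : ℝ} (hp : 3 / 2 < p) :
    Integrable fun x : ℝ ↦ x ^ 2 * (1 + b * x ^ 2) ^ (-p) := by
  simp_rw [sq_mul_one_add_mul_sq_rpow_neg hb]
  exact ((integrable_one_add_mul_sq_rpow_neg hb (by linarith)).sub
    (integrable_one_add_mul_sq_rpow_neg hb (by linarith))).const_mul _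

theorem hasDerivAt_mul_one_add_mul_sq_rpow_neg (hb : 0 ≤ b) (p x : ℝ) :
    HasDerivAt (fun x ↦ x * (1 + b * x ^ 2) ^ (-(p - 1)))
      ((1 + b * x ^ 2) ^ (-p) - b * (2 * p - 3) * (x ^ 2 * (1 + b * x ^ 2) ^ (-p))) x := by
  have hpos : 0 < 1 + b * x ^ 2 := by positivity
  have hbase : HasDerivAt (fun x ↦ 1 + b * x ^ 2) (b * (2 * x)) x := by
    simpa using ((hasDerivAt_pow 2 x).const_mul b).const_add 1
  refine ((hasDerivAt_id' x).mul (hbase.rpow_const (p := -(p - 1)) (.inl hpos.ne'))).congr_deriv ?_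
  rw [show -(p - 1) - 1 = -p by ring, one_add_mul_sq_rpow_neg_sub_one hb]
  ring

theorem integral_sq_mul_one_add_mul_sq_rpow_neg (hb : 0 < b) {p : ℝ} (hp : 5 / 2 < p) :
    ∫ x, x ^ 2 * (1 + b * x ^ 2) ^ (-p) = (b * (2 * p - 3))⁻¹ * ∫ x, (1 + b * x ^ 2) ^ (-p) :=
  integral_sq_mul_eq_of_hasDerivAt (by nlinarith) (hasDerivAt_mul_one_add_mul_sq_rpow_neg hb.le p)
    (integrable_mul_of_integrable_sq_mul (integrable_one_add_mul_sq_rpow_neg hb (by linarith))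
      (integrable_sq_mul_one_add_mul_sq_rpow_neg hb (by linarith)))
    (integrable_one_add_mul_sq_rpow_neg hb (by linarith))
    (integrable_sq_mul_one_add_mul_sq_rpow_neg hb (by linarith))

theorem integral_one_add_mul_sq_rpow_neg_pos (hb : 0 < b) {p : ℝ} (hp : 1 / 2 < p) :
    0 < ∫ x, (1 + b * x ^ 2) ^ (-p) :=
  integral_pos_of_integrable_nonneg_nonzero (x := 0)
    ((by fun_prop : Continuous fun x : ℝ ↦ 1 + b * x ^ 2).rpow_const
      fun x ↦ Or.inl (by positivity)) (integrable_one_add_mul_sq_rpow_neg hb hp)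
    (fun x ↦ by positivity) (by simp)

end PowerLaw

theorem integrable_sq_mul_exp_neg_mul_sq {c : ℝ} (hc : 0 < c) :
    Integrable fun x : ℝ ↦ x ^ 2 * exp (-c * x ^ 2) := by
  simpa using integrable_rpow_mul_exp_neg_mul_sq hc (s := 2) (by norm_num)

theorem integral_sq_mul_exp_neg_mul_sq {c : ℝ} (hc : 0 < c) :
    ∫ x, x ^ 2 * exp (-c * x ^ 2) = (2 * c)⁻¹ * ∫ x, exp (-c * x ^ 2) := by
  refine integral_sq_mul_eq_of_hasDerivAt (by positivity) (fun x ↦ ?_)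
    (integrable_mul_exp_neg_mul_sq hc) (integrable_exp_neg_mul_sq hc)
    (integrable_sq_mul_exp_neg_mul_sq hc)
  have hexp : HasDerivAt (fun x ↦ exp (-c * x ^ 2)) (exp (-c * x ^ 2) * (-c * (2 * x))) x := by
    simpa using ((hasDerivAt_pow 2 x).const_mul (-c)).exp
  refine ((hasDerivAt_id' x).mul hexp).congr_deriv ?_
  ring

theorem qExp_neg_of_one_lt {q t : ℝ} (hq : 1 < q) (ht : 0 ≤ t) :
    qExp q (-t) = (1 + (q - 1) * t) ^ (-(q - 1)⁻¹) := by
  have hq' : q - 1 ≠ 0 := sub_ne_zero.2 hq.ne'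
  rw [qExp, if_neg hq.ne', max_eq_right (by nlinarith), one_div, ← neg_sub, inv_neg]
  ring_nf

theorem Cq_pos {q : ℝ} (hq1 : 1 ≤ q) (hq3 : q < 3) : 0 < Cq q := by
  rcases hq1.eq_or_lt with rfl | hq
  · simp only [Cq, qExp, if_true]
    simpa using (integral_gaussian 1).ge.trans_lt' (sqrt_pos.2 (by positivity))
  · simp_rw [Cq, qExp_neg_of_one_lt hq (sq_nonneg _)]
    refine integral_one_add_mul_sq_rpow_neg_pos (by linarith) ?_
    rw [lt_inv_comm₀ (by norm_num) (by linarith)]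
    linarith

theorem qGauss_one (m σ x : ℝ) :
    qGauss 1 m σ x = √(1 / (3 - 1)) / (σ * Cq 1) * exp (-(2 * σ ^ 2)⁻¹ * (x - m) ^ 2) := by
  rw [qGauss, qExp, if_pos rfl]
  ring_nf

theorem qGauss_rpow_two_mul_sub_one {q m σ : ℝ} (hq1 : 1 < q) (hq3 : q < 3) (hσ : 0 < σ)
    (x : ℝ) :
    qGauss q m σ x ^ (2 * q - 1) = (√(1 / (3 - q)) / (σ * Cq q)) ^ (2 * q - 1) *
      (1 + (q - 1) / ((3 - q) * σ ^ 2) * (x - m) ^ 2) ^ (-((2 * q - 1) / (q - 1))) := by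
  have h3q : 0 < 3 - q := by linarith
  have hq1' : q - 1 ≠ 0 := by linarith
  have hbase : 1 + (q - 1) * (1 / (3 - q) * (x - m) ^ 2 / σ ^ 2) =
      1 + (q - 1) / ((3 - q) * σ ^ 2) * (x - m) ^ 2 := by
    field_simp
  rw [qGauss, qExp_neg_of_one_lt hq1 (by positivity), hbase,
    mul_rpow (div_nonneg (sqrt_nonneg _) (by positivity [Cq_pos hq1.le hq3])) (by positivity),
    ← rpow_mul (by positivity)]
  congr 2
  field_simp

theorem qGauss_normalized_variance (q m σ : ℝ) (hq1 : 1 ≤ q) (hq3 : q < 3) (hσ : 0 < σ) :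
    (∫ x : ℝ, (x - m) ^ 2 *
        ((qGauss q m σ x) ^ (2 * q - 1) / (∫ t : ℝ, (qGauss q m σ t) ^ (2 * q - 1)))) =
      ((3 - q) / (q + 1)) * σ ^ 2 := by
  have hC := Cq_pos hq1 hq3
  rcases hq1.eq_or_lt with rfl | hq
  · have hc : 0 < (2 * σ ^ 2)⁻¹ := by positivity
    simp_rw [show (2 : ℝ) * 1 - 1 = 1 by norm_num, rpow_one, qGauss_one]
    refine integral_sub_sq_mul_div_integral_comp_sub (h := fun x ↦ exp (-(2 * σ ^ 2)⁻¹ * x ^ 2))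
      m (by positivity) (by rw [integral_gaussian]; positivity) ?_
    rw [integral_sq_mul_exp_neg_mul_sq hc]
    congr 1
    field_simp
    norm_num
  · have hb : 0 < (q - 1) / ((3 - q) * σ ^ 2) :=
      div_pos (by linarith) (mul_pos (by linarith) (by positivity))
    have hp : 5 / 2 < (2 * q - 1) / (q - 1) := by
      rw [lt_div_iff₀ (by linarith)]
      linarith
    simp_rw [qGauss_rpow_two_mul_sub_one hq hq3 hσ]
    refine integral_sub_sq_mul_div_integral_comp_sub m (by positivity)
      (integral_one_add_mul_sq_rpow_neg_pos hb (by linarith)).ne' ?_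
    rw [integral_sq_mul_one_add_mul_sq_rpow_neg hb hp]
    congr 1
    have : q - 1 ≠ 0 := by linarith
    have : 3 - q ≠ 0 := by linarith
    have : q + 1 ≠ 0 := by linarith
    rw [inv_eq_iff_eq_inv]
    field_simp
    ring
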